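/- (Corollary 1, covariance-ordering part.) For every Markov transition kernel R on Y having f_Y as invariant density and every measurable h : X → ℝ with ∫_X h² f_X dμ_x < ∞ and ∫_X h f_X dμ_x = 0, one has ∫_X ∫_X h(x) h(x') p_R(x|x') f_X(x') μ_x(dx') μ_x(dx) ≤ ∫_X ∫_X h(x) h(x') p(x|x') f_X(x') μ_x(dx') μ_x(dx); that is, p_R dominates the DA algorithm p in the covariance ordering. -/

import Mathlib

open MeasureTheory ProbabilityTheory
open scoped ENNReal

/-!
Let `ν = f_Y μ_y` and let `g y = ∫ h(x) f_{X|Y}(x|y) μ_x(dx)` be the conditional mean of `h`.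
Bayes' rule `f_{Y|X}(y|x') f_X(x') = f_{X|Y}(x'|y) f_Y(y)` and Fubini turn the `p_R`-covariance
of `h` into `⟨g, R g⟩` in `L²(ν)`; the DA chain is the case `R = id`, with covariance `‖g‖²`.
As `R` is Markov and leaves `ν` invariant, Jensen gives `‖R g‖ ≤ ‖g‖`, and Cauchy–Schwarz
gives `⟨g, R g⟩ ≤ ‖g‖²`. Every exchange of integrals is justified by running the same
computation with `|h|`, which stays finite because `(E[|h| | Y])² ≤ E[h² | Y]`.
-/

section Integrals

variable {α : Type*} [MeasurableSpace α] {μ : Measure α}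

theorem sq_lintegral_mul_le {a b : α → ℝ≥0∞} (ha : AEMeasurable a μ) (hb : AEMeasurable b μ) :
    (∫⁻ x, a x * b x ∂μ) ^ 2 ≤ (∫⁻ x, a x ^ 2 ∂μ) * ∫⁻ x, b x ^ 2 ∂μ := by
  have hsqrt (c : ℝ≥0∞) : (c ^ 2) ^ (1 / 2 : ℝ) = c := by
    rw [← ENNReal.rpow_natCast, ← ENNReal.rpow_mul]; norm_num
  have holder := ENNReal.lintegral_mul_norm_pow_le (ha.pow_const 2) (hb.pow_const 2)
    (p := 1 / 2) (q := 1 / 2) (by norm_num) (by norm_num) (by norm_num)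
  simp only [hsqrt] at holder
  calc (∫⁻ x, a x * b x ∂μ) ^ 2
      ≤ ((∫⁻ x, a x ^ 2 ∂μ) ^ (1 / 2 : ℝ) * (∫⁻ x, b x ^ 2 ∂μ) ^ (1 / 2 : ℝ)) ^ 2 := by
        gcongr
    _ = (∫⁻ x, a x ^ 2 ∂μ) * ∫⁻ x, b x ^ 2 ∂μ := by
        rw [mul_pow, ← ENNReal.rpow_natCast, ← ENNReal.rpow_natCast, ← ENNReal.rpow_mul,
          ← ENNReal.rpow_mul]
        norm_num

theorem sq_lintegral_le [IsProbabilityMeasure μ] {a : α → ℝ≥0∞} (ha : AEMeasurable a μ) :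
    (∫⁻ x, a x ∂μ) ^ 2 ≤ ∫⁻ x, a x ^ 2 ∂μ := by
  simpa using sq_lintegral_mul_le ha aemeasurable_const (b := 1)

theorem sq_lintegral_mul_le_lintegral_mul_sq {w a : α → ℝ≥0∞} (hw : AEMeasurable w μ)
    (ha : Measurable a) :
    (∫⁻ x, w x * a x ∂μ) ^ 2 ≤ (∫⁻ x, w x * a x ^ 2 ∂μ) * ∫⁻ x, w x ∂μ := by
  have hdens (φ : α → ℝ≥0∞) (hφ : AEMeasurable φ μ) :
      ∫⁻ x, φ x ∂μ.withDensity w = ∫⁻ x, w x * φ x ∂μ :=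
    lintegral_withDensity_eq_lintegral_mul₀ hw hφ
  simpa [hdens _ ha.aemeasurable, hdens _ (ha.pow_const 2).aemeasurable] using
    sq_lintegral_mul_le (μ := μ.withDensity w) ha.aemeasurable (aemeasurable_const (b := 1))

theorem enorm_integral_eq_lintegral_enorm_of_nonneg {φ : α → ℝ} (hφ : Integrable φ μ)
    (hφ0 : 0 ≤ φ) : ‖∫ a, φ a ∂μ‖ₑ = ∫⁻ a, ‖φ a‖ₑ ∂μ := by
  rw [lintegral_enorm_of_nonneg hφ0, ← ofReal_integral_eq_lintegral_ofReal hφ (.of_forall hφ0),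
    Real.enorm_eq_ofReal (integral_nonneg hφ0)]

theorem lintegral_enorm_div_integral_self {φ : α → ℝ} (hφ0 : 0 ≤ φ) (hφ : ∫ a, φ a ∂μ ≠ 0) :
    ∫⁻ a, ‖φ a / ∫ b, φ b ∂μ‖ₑ ∂μ = 1 := by
  simp_rw [div_eq_mul_inv, enorm_mul]
  rw [lintegral_mul_const' _ _ enorm_ne_top,
    ← enorm_integral_eq_lintegral_enorm_of_nonneg (.of_integral_ne_zero hφ) hφ0, ← enorm_mul,
    mul_inv_cancel₀ hφ, enorm_one]

theorem integral_withDensity_div {ρ : α → ℝ} (hρ : Measurable ρ) (hρ_pos : ∀ a, 0 < ρ a)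
    (F : α → ℝ) : ∫ a, F a / ρ a ∂μ.withDensity (fun a => .ofReal (ρ a)) = ∫ a, F a ∂μ := by
  rw [integral_withDensity_eq_integral_toReal_smul hρ.ennreal_ofReal
    (.of_forall fun _ => ENNReal.ofReal_lt_top)]
  refine integral_congr_ae (.of_forall fun a => ?_)
  simp [ENNReal.toReal_ofReal (hρ_pos a).le, mul_div_cancel₀ _ (hρ_pos a).ne']

end Integrals

namespace ProbabilityTheory.Kernel

variable {α : Type*} [MeasurableSpace α] {κ : Kernel α α} {ν : Measure α}

theorem Invariant.lintegral_lintegral (hκ : κ.Invariant ν) {φ : α → ℝ≥0∞}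
    (hφ : Measurable φ) : ∫⁻ a, ∫⁻ b, φ b ∂κ a ∂ν = ∫⁻ a, φ a ∂ν := by
  conv_rhs => rw [← hκ.def]
  rw [Measure.lintegral_bind κ.aemeasurable (hκ.def ▸ hφ.aemeasurable)]

variable [IsMarkovKernel κ]

theorem Invariant.lintegral_sq_lintegral_le (hκ : κ.Invariant ν) {φ : α → ℝ≥0∞}
    (hφ : Measurable φ) : ∫⁻ a, (∫⁻ b, φ b ∂κ a) ^ 2 ∂ν ≤ ∫⁻ a, φ a ^ 2 ∂ν :=
  calc ∫⁻ a, (∫⁻ b, φ b ∂κ a) ^ 2 ∂ν ≤ ∫⁻ a, ∫⁻ b, φ b ^ 2 ∂κ a ∂ν :=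
        lintegral_mono fun _ => sq_lintegral_le hφ.aemeasurable
    _ = ∫⁻ a, φ a ^ 2 ∂ν := hκ.lintegral_lintegral (hφ.pow_const 2)

theorem Invariant.lintegral_mul_lintegral_le (hκ : κ.Invariant ν) {φ : α → ℝ≥0∞}
    (hφ : Measurable φ) : ∫⁻ a, φ a * ∫⁻ b, φ b ∂κ a ∂ν ≤ ∫⁻ a, φ a ^ 2 ∂ν := by
  rw [← ENNReal.pow_le_pow_left_iff two_ne_zero]
  calc (∫⁻ a, φ a * ∫⁻ b, φ b ∂κ a ∂ν) ^ 2
      ≤ (∫⁻ a, φ a ^ 2 ∂ν) * ∫⁻ a, (∫⁻ b, φ b ∂κ a) ^ 2 ∂ν :=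
        sq_lintegral_mul_le hφ.aemeasurable hφ.lintegral_kernel.aemeasurable
    _ ≤ (∫⁻ a, φ a ^ 2 ∂ν) ^ 2 := by
        rw [sq (∫⁻ a, φ a ^ 2 ∂ν)]
        exact mul_le_mul' le_rfl (hκ.lintegral_sq_lintegral_le hφ)

theorem Invariant.integral_mul_integral_le (hκ : κ.Invariant ν) {g : α → ℝ}
    (hg : Measurable g) (hg2 : ∫⁻ a, ‖g a‖ₑ ^ 2 ∂ν ≠ ∞) :
    ∫ a, g a * ∫ b, g b ∂κ a ∂ν ≤ ∫ a, g a ^ 2 ∂ν := by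
  have hbound : ∫⁻ a, ‖g a * ∫ b, g b ∂κ a‖ₑ ∂ν ≤ ∫⁻ a, ‖g a‖ₑ ^ 2 ∂ν :=
    calc ∫⁻ a, ‖g a * ∫ b, g b ∂κ a‖ₑ ∂ν ≤ ∫⁻ a, ‖g a‖ₑ * ∫⁻ b, ‖g b‖ₑ ∂κ a ∂ν := by
          simp_rw [enorm_mul]
          gcongr with a
          exact enorm_integral_le_lintegral_enorm _
      _ ≤ ∫⁻ a, ‖g a‖ₑ ^ 2 ∂ν := hκ.lintegral_mul_lintegral_le hg.enorm
  have hsq : ∫ a, g a ^ 2 ∂ν = (∫⁻ a, ‖g a‖ₑ ^ 2 ∂ν).toReal := by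
    rw [integral_eq_lintegral_of_nonneg_ae (.of_forall fun a => sq_nonneg (g a))
      (hg.pow_const 2).aestronglyMeasurable]
    congr 1
    refine lintegral_congr fun a => ?_
    rw [← enorm_pow, Real.enorm_of_nonneg (sq_nonneg _)]
  calc ∫ a, g a * ∫ b, g b ∂κ a ∂ν ≤ ‖∫ a, g a * ∫ b, g b ∂κ a ∂ν‖ := le_abs_self _
    _ = ‖∫ a, g a * ∫ b, g b ∂κ a ∂ν‖ₑ.toReal := (toReal_enorm _).symm
    _ ≤ ∫ a, g a ^ 2 ∂ν :=
        hsq ▸ ENNReal.toReal_mono hg2 ((enorm_integral_le_lintegral_enorm _).trans hbound)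

theorem invariant_withDensity_ofReal {μ : Measure α} {ρ : α → ℝ} (hρ : Integrable ρ μ)
    (hρ0 : ∀ a, 0 ≤ ρ a)
    (hinv : ∀ A, MeasurableSet A → ∫ a, (κ a A).toReal * ρ a ∂μ = ∫ a in A, ρ a ∂μ) :
    κ.Invariant (μ.withDensity fun a => .ofReal (ρ a)) := by
  ext A hA
  have hκA : Integrable (fun a => (κ a A).toReal * ρ a) μ :=
    hρ.bdd_mul (c := 1) (κ.measurable_coe hA).ennreal_toReal.aestronglyMeasurable
      (.of_forall fun a => by
        rw [Real.norm_of_nonneg ENNReal.toReal_nonneg]; exact measureReal_le_one)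
  rw [Measure.bind_apply hA κ.aemeasurable, withDensity_apply _ hA,
    lintegral_withDensity_eq_lintegral_mul₀ hρ.aemeasurable.ennreal_ofReal
      (κ.measurable_coe hA).aemeasurable,
    ← ofReal_integral_eq_lintegral_ofReal hρ.restrict (.of_forall hρ0), ← hinv A hA,
    ofReal_integral_eq_lintegral_ofReal hκA
      (.of_forall fun a => mul_nonneg ENNReal.toReal_nonneg (hρ0 a))]
  refine lintegral_congr fun a => ?_
  rw [ENNReal.ofReal_mul ENNReal.toReal_nonneg, ENNReal.ofReal_toReal (measure_ne_top _ _),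
    Pi.mul_apply, mul_comm]

end ProbabilityTheory.Kernel

section Fubini

variable {X Y : Type*} [MeasurableSpace X] [MeasurableSpace Y] {μ : Measure X} {ν : Measure Y}
  [SFinite μ] [SFinite ν]

theorem integral_integral_swap_of_lintegral_ne_top {F : X → Y → ℝ}
    (hF : Measurable (Function.uncurry F)) (hfin : ∫⁻ y, ∫⁻ x, ‖F x y‖ₑ ∂μ ∂ν ≠ ∞) :
    ∫ x, ∫ y, F x y ∂ν ∂μ = ∫ y, ∫ x, F x y ∂μ ∂ν := by
  refine integral_integral_swap ⟨hF.aestronglyMeasurable, ?_⟩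
  rw [HasFiniteIntegral, lintegral_prod_symm' _ hF.enorm]
  exact hfin.lt_top

theorem integral_integral_mul_swap {k : Y → ℝ} {F : X → Y → ℝ} (hk : Measurable k)
    (hF : Measurable (Function.uncurry F))
    (hfin : ∫⁻ y, ‖k y‖ₑ * ∫⁻ x, ‖F x y‖ₑ ∂μ ∂ν ≠ ∞) :
    ∫ x, ∫ y, k y * F x y ∂ν ∂μ = ∫ y, k y * ∫ x, F x y ∂μ ∂ν := by
  rw [integral_integral_swap_of_lintegral_ne_top ((hk.comp measurable_snd).mul hF)]
  · simp_rw [integral_const_mul]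
  · simpa only [enorm_mul, lintegral_const_mul' _ _ enorm_ne_top] using hfin

theorem lintegral_enorm_integral_le {F : X → Y → ℝ} (hF : Measurable (Function.uncurry F)) :
    ∫⁻ x, ‖∫ y, F x y ∂ν‖ₑ ∂μ ≤ ∫⁻ y, ∫⁻ x, ‖F x y‖ₑ ∂μ ∂ν :=
  (lintegral_mono fun _ => enorm_integral_le_lintegral_enorm _).trans_eq
    (lintegral_lintegral_swap hF.enorm.aemeasurable)

end Fubini

theorem measurable_uncurry_integral_kernel {X Y Z : Type*} [MeasurableSpace X]
    [MeasurableSpace Y] [MeasurableSpace Z] (κ : Kernel Y Z) [IsSFiniteKernel κ]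
    {F : X → Z → ℝ} (hF : Measurable (Function.uncurry F)) :
    Measurable (Function.uncurry fun x y => ∫ z, F x z ∂κ y) := by
  have := StronglyMeasurable.integral_kernel_prod_right' (κ := Kernel.prodMkLeft X κ)
    (f := fun p : (X × Y) × Z => F p.1.1 p.2)
    (hF.comp (measurable_fst.fst.prodMk measurable_snd)).stronglyMeasurable
  simp only [Kernel.prodMkLeft_apply] at this
  exact this.measurable

section Covariance

variable {X Y : Type*} [MeasurableSpace X] [MeasurableSpace Y] {μ : Measure X} {ν : Measure Y}
  [SFinite μ] {R : Kernel Y Y} [IsMarkovKernel R] {q : X → Y → ℝ} {h : X → ℝ}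

theorem lintegral_mul_lintegral_enorm_mul_integral_kernel_le (hR : R.Invariant ν)
    (hq : Measurable (Function.uncurry q)) (hh : Measurable h) :
    ∫⁻ y, (∫⁻ x, ‖h x * q x y‖ₑ ∂μ) * ∫⁻ x, ‖h x * ∫ y', q x y' ∂(R y)‖ₑ ∂μ ∂ν
      ≤ ∫⁻ y, (∫⁻ x, ‖h x * q x y‖ₑ ∂μ) ^ 2 ∂ν := by
  have hhq : Measurable (Function.uncurry fun x y => h x * q x y) := by fun_prop
  refine (lintegral_mono fun y => mul_le_mul' le_rfl ?_).trans
    (hR.lintegral_mul_lintegral_le hhq.enorm.lintegral_prod_left')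
  simp_rw [← integral_const_mul]
  exact lintegral_enorm_integral_le hhq

theorem integral_integral_integral_kernel_eq [SFinite ν] (hR : R.Invariant ν)
    (hq : Measurable (Function.uncurry q)) (hh : Measurable h)
    (hh2 : ∫⁻ y, (∫⁻ x, ‖h x * q x y‖ₑ ∂μ) ^ 2 ∂ν ≠ ∞) :
    ∫ x, ∫ x', ∫ y, (h x * ∫ y', q x y' ∂(R y)) * (h x' * q x' y) ∂ν ∂μ ∂μ
      = ∫ y, (∫ x, h x * q x y ∂μ) * ∫ y', (∫ x, h x * q x y' ∂μ) ∂(R y) ∂ν := by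
  set g : Y → ℝ := fun y => ∫ x, h x * q x y ∂μ
  set G : Y → ℝ≥0∞ := fun y => ∫⁻ x, ‖h x * q x y‖ₑ ∂μ
  set K : X → Y → ℝ := fun x y => ∫ y', q x y' ∂(R y)
  have hhq : Measurable (Function.uncurry fun x y => h x * q x y) := by fun_prop
  have hhK : Measurable (Function.uncurry fun x y => h x * K x y) :=
    (hh.comp measurable_fst).mul (measurable_uncurry_integral_kernel R hq :)
  have hG : Measurable G := hhq.enorm.lintegral_prod_left'
  have hfin : ∫⁻ y, G y * ∫⁻ x, ‖h x * K x y‖ₑ ∂μ ∂ν ≠ ∞ :=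
    ne_top_of_le_ne_top hh2 (lintegral_mul_lintegral_enorm_mul_integral_kernel_le hR hq hh)
  have h_inner : ∀ᵐ x ∂μ, ∫ x', ∫ y, (h x * K x y) * (h x' * q x' y) ∂ν ∂μ
      = ∫ y, (h x * K x y) * g y ∂ν := by
    have hmeas : Measurable (Function.uncurry fun x y => ‖h x * K x y‖ₑ * G y) :=
      hhK.enorm.mul (hG.comp measurable_snd)
    have hlt : ∫⁻ x, ∫⁻ y, ‖h x * K x y‖ₑ * G y ∂ν ∂μ ≠ ∞ := by
      rw [lintegral_lintegral_swap hmeas.aemeasurable]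
      refine ne_of_eq_of_ne (lintegral_congr fun y => ?_) hfin
      have hy : Measurable fun x => h x * K x y := hhK.comp measurable_prodMk_right
      rw [lintegral_mul_const _ hy.enorm, mul_comm]
    filter_upwards [ae_lt_top hmeas.lintegral_prod_right' hlt] with x hx
    exact integral_integral_mul_swap (hhK.comp measurable_prodMk_left) hhq hx.ne
  have h_outer : ∫ x, ∫ y, (h x * K x y) * g y ∂ν ∂μ = ∫ y, g y * ∫ x, h x * K x y ∂μ ∂ν := by
    simp_rw [mul_comm (h _ * K _ _) (g _)]
    refine integral_integral_mul_swap hhq.stronglyMeasurable.integral_prod_left'.measurable hhK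
      (ne_top_of_le_ne_top hfin ?_)
    exact lintegral_mono fun y => mul_le_mul' (enorm_integral_le_lintegral_enorm _) le_rfl
  have h_kernel : ∀ᵐ y ∂ν, ∫ x, h x * K x y ∂μ = ∫ y', g y' ∂(R y) := by
    have hsq := ae_lt_top (hG.lintegral_kernel.pow_const 2)
      (ne_top_of_le_ne_top hh2 (hR.lintegral_sq_lintegral_le hG))
    filter_upwards [hsq] with y hy
    simp_rw [K, ← integral_const_mul]
    exact integral_integral_swap_of_lintegral_ne_top hhq
      ((ENNReal.pow_lt_top_iff.mp hy).resolve_right two_ne_zero).ne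
  calc ∫ x, ∫ x', ∫ y, (h x * K x y) * (h x' * q x' y) ∂ν ∂μ ∂μ
      = ∫ x, ∫ y, (h x * K x y) * g y ∂ν ∂μ := integral_congr_ae h_inner
    _ = ∫ y, g y * ∫ x, h x * K x y ∂μ ∂ν := h_outer
    _ = ∫ y, g y * ∫ y', g y' ∂(R y) ∂ν :=
        integral_congr_ae (h_kernel.mono fun y hy => congrArg (g y * ·) hy)

theorem integral_integral_integral_eq_integral_sq [SFinite ν]
    (hq : Measurable (Function.uncurry q)) (hh : Measurable h) (hh2 : ∫⁻ y, (∫⁻ x, ‖h x * q x y‖ₑ ∂μ) ^ 2 ∂ν ≠ ∞) :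
    ∫ x, ∫ x', ∫ y, (h x * q x y) * (h x' * q x' y) ∂ν ∂μ ∂μ
      = ∫ y, (∫ x, h x * q x y ∂μ) ^ 2 ∂ν := by
  have hg : Measurable fun y => ∫ x, h x * q x y ∂μ :=
    ((hh.comp measurable_fst).mul hq).stronglyMeasurable.integral_prod_left'.measurable
  have hqx (x : X) : StronglyMeasurable (q x) :=
    (hq.comp measurable_prodMk_left).stronglyMeasurable
  simpa only [Kernel.id_apply, integral_dirac' _ _ (hqx _),
    integral_dirac' _ _ hg.stronglyMeasurable, sq] using
    integral_integral_integral_kernel_eq (R := Kernel.id) Measure.id_comp hq hh hh2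

end Covariance

section JointDensity

variable {X Y : Type*} [MeasurableSpace X] [MeasurableSpace Y] {μx : Measure X} {μy : Measure Y}
  {f : X → Y → ℝ} {fY : Y → ℝ}

theorem lintegral_sq_lintegral_enorm_mul_div_le [SFinite μx] [SFinite μy]
    (hf : Measurable (Function.uncurry f)) (hf0 : ∀ x y, 0 ≤ f x y)
    (hfY : ∀ y, fY y = ∫ x, f x y ∂μx) (hfY_meas : Measurable fY) (hfY_pos : ∀ y, 0 < fY y)
    {h : X → ℝ} (hh : Measurable h) :
    ∫⁻ y, (∫⁻ x, ‖h x * (f x y / fY y)‖ₑ ∂μx) ^ 2 ∂μy.withDensity (fun y => .ofReal (fY y))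
      ≤ ∫⁻ x, (∫⁻ y, ‖f x y‖ₑ ∂μy) * ‖h x‖ₑ ^ 2 ∂μx := by
  have hmass (y : Y) : ∫⁻ x, ‖f x y / fY y‖ₑ ∂μx = 1 := by
    rw [hfY]; exact lintegral_enorm_div_integral_self (hf0 · y) (hfY y ▸ (hfY_pos y).ne')
  have hweight (x : X) (y : Y) : ENNReal.ofReal (fY y) * ‖f x y / fY y‖ₑ = ‖f x y‖ₑ := by
    rw [← Real.enorm_of_nonneg (hfY_pos y).le, ← enorm_mul, mul_div_cancel₀ _ (hfY_pos y).ne']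
  have hmeas : Measurable fun y => ∫⁻ x, ‖f x y / fY y‖ₑ * ‖h x‖ₑ ^ 2 ∂μx :=
    (show Measurable (Function.uncurry fun x y => ‖f x y / fY y‖ₑ * ‖h x‖ₑ ^ 2) by fun_prop)
      |>.lintegral_prod_left'
  calc _ ≤ ∫⁻ y, ∫⁻ x, ‖f x y / fY y‖ₑ * ‖h x‖ₑ ^ 2 ∂μx
          ∂μy.withDensity (fun y => .ofReal (fY y)) := by
        refine lintegral_mono fun y => ?_
        have hy : Measurable fun x => f x y / fY y := by fun_prop
        simpa [hmass, enorm_mul, mul_comm] using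
          sq_lintegral_mul_le_lintegral_mul_sq (μ := μx) hy.enorm.aemeasurable hh.enorm
    _ = ∫⁻ y, ∫⁻ x, ‖f x y‖ₑ * ‖h x‖ₑ ^ 2 ∂μx ∂μy := by
        rw [lintegral_withDensity_eq_lintegral_mul _ hfY_meas.ennreal_ofReal hmeas]
        refine lintegral_congr fun y => ?_
        rw [Pi.mul_apply, ← lintegral_const_mul' _ _ ENNReal.ofReal_ne_top]
        simp_rw [← mul_assoc, hweight]
    _ = ∫⁻ x, (∫⁻ y, ‖f x y‖ₑ ∂μy) * ‖h x‖ₑ ^ 2 ∂μx := by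
        rw [lintegral_lintegral_swap (by fun_prop)]
        exact lintegral_congr fun x => lintegral_mul_const _ (by fun_prop)

theorem integral_integral_mul_div_eq_withDensity {fX : X → ℝ} (hfX : ∀ x, fX x ≠ 0)
    (hfY_meas : Measurable fY) (hfY_pos : ∀ y, 0 < fY y) (h : X → ℝ) (k : X → Y → ℝ) :
    ∫ x, ∫ x', h x * h x' * (∫ y, k x y * (f x' y / fX x') ∂μy) * fX x' ∂μx ∂μx
      = ∫ x, ∫ x', ∫ y, (h x * k x y) * (h x' * (f x' y / fY y))
          ∂μy.withDensity (fun y => .ofReal (fY y)) ∂μx ∂μx := by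
  refine integral_congr_ae (.of_forall fun x => integral_congr_ae (.of_forall fun x' => ?_))
  calc h x * h x' * (∫ y, k x y * (f x' y / fX x') ∂μy) * fX x'
      = ∫ y, (h x * k x y) * (h x' * f x' y) ∂μy := by
        rw [← integral_const_mul, ← integral_mul_const]
        refine integral_congr_ae (.of_forall fun y => ?_)
        field_simp [hfX x']
    _ = ∫ y, (h x * k x y) * (h x' * f x' y) / fY y ∂μy.withDensity (fun y => .ofReal (fY y)) :=
        (integral_withDensity_div hfY_meas hfY_pos _).symm
    _ = _ := by simp only [mul_div_assoc]

end JointDensity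

theorem pR_dominates_da_covariance_general
    {X Y : Type*}
    [MeasurableSpace X]
    [MeasurableSpace Y]
    (μx : Measure X) (μy : Measure Y) [SigmaFinite μx] [SigmaFinite μy]
    (f : X → Y → ℝ)
    (hf_meas : Measurable (Function.uncurry f))
    (hf_nonneg : ∀ x y, 0 ≤ f x y)
    (hf_prob : ∫ q, f q.1 q.2 ∂(μx.prod μy) = 1)
    (fX : X → ℝ) (hfX : ∀ x, fX x = ∫ y, f x y ∂μy)
    (fY : Y → ℝ) (hfY : ∀ y, fY y = ∫ x, f x y ∂μx)
    (hfX_pos : ∀ x, 0 < fX x) (hfY_pos : ∀ y, 0 < fY y)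
    (fXY : X → Y → ℝ) (hfXY : ∀ x y, fXY x y = f x y / fY y)
    (fYX : Y → X → ℝ) (hfYX : ∀ y x, fYX y x = f x y / fX x)
    (p : X → X → ℝ) (hp : ∀ x x', p x x' = ∫ y, fXY x y * fYX y x' ∂μy)
    (R : Kernel Y Y) [IsMarkovKernel R]
    (hR_inv : ∀ A : Set Y, MeasurableSet A →
      ∫ y, ((R y) A).toReal * fY y ∂μy = ∫ y in A, fY y ∂μy)
    (pR : X → X → ℝ)
    (hpR : ∀ x x', pR x x' = ∫ y, (∫ y', fXY x y' ∂(R y)) * fYX y x' ∂μy) :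
    ∀ h : X → ℝ, Measurable h →
      Integrable (fun x => h x ^ 2 * fX x) μx →
      (∫ x, h x * fX x ∂μx) = 0 →
      ∫ x, (∫ x', h x * h x' * pR x x' * fX x' ∂μx) ∂μx
        ≤ ∫ x, (∫ x', h x * h x' * p x x' * fX x' ∂μx) ∂μx := by
  intro h hh hL2 _
  have hfY_meas : Measurable fY := by
    rw [show fY = fun y => ∫ x, f x y ∂μx from funext hfY]
    exact (hf_meas.stronglyMeasurable.integral_prod_left' (μ := μx)).measurable
  have hfY_int : Integrable fY μy :=
    (Integrable.of_integral_ne_zero (hf_prob ▸ one_ne_zero)).integral_prod_right.congr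
      (.of_forall fun y => (hfY y).symm)
  have hR := Kernel.invariant_withDensity_ofReal hfY_int (hfY_pos · |>.le) hR_inv
  have hq : Measurable (Function.uncurry fun x y => f x y / fY y) := by fun_prop
  have hG2 : ∫⁻ y, (∫⁻ x, ‖h x * (f x y / fY y)‖ₑ ∂μx) ^ 2
      ∂μy.withDensity (fun y => .ofReal (fY y)) ≠ ∞ := by
    refine ne_top_of_le_ne_top ?_
      (lintegral_sq_lintegral_enorm_mul_div_le hf_meas hf_nonneg hfY hfY_meas hfY_pos hh)
    refine ne_of_eq_of_ne (lintegral_congr fun x => ?_) hL2.hasFiniteIntegral.ne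
    rw [enorm_mul, enorm_pow, mul_comm, hfX, enorm_integral_eq_lintegral_enorm_of_nonneg
      (.of_integral_ne_zero (hfX x ▸ (hfX_pos x).ne')) (hf_nonneg x)]
  have hg : Measurable fun y => ∫ x, h x * (f x y / fY y) ∂μx :=
    ((hh.comp measurable_fst).mul hq).stronglyMeasurable.integral_prod_left'.measurable
  simp only [hpR, hp, hfXY, hfYX]
  rw [integral_integral_mul_div_eq_withDensity (hfX_pos · |>.ne') hfY_meas hfY_pos h
      (fun x y => ∫ y', f x y' / fY y' ∂(R y)),
    integral_integral_mul_div_eq_withDensity (hfX_pos · |>.ne') hfY_meas hfY_pos h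
      (fun x y => f x y / fY y),
    integral_integral_integral_kernel_eq hR hq hh hG2,
    integral_integral_integral_eq_integral_sq hq hh hG2]
  exact hR.integral_mul_integral_le hg (ne_top_of_le_ne_top hG2
    (lintegral_mono fun y => by gcongr; exact enorm_integral_le_lintegral_enorm _))

/-- Corollary 1 (covariance-ordering part): for every Markov transition kernel `R` on `Y`
with invariant density `f_Y`, the chain `p_R` dominates the DA chain `p` in the covariance
ordering with respect to `f_X`. -/
theorem pR_dominates_da_covariance
    {X Y : Type*}
    [MetricSpace X] [TopologicalSpace.SeparableSpace X] [LocallyCompactSpace X]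
    [MeasurableSpace X] [BorelSpace X]
    [MetricSpace Y] [TopologicalSpace.SeparableSpace Y] [LocallyCompactSpace Y]
    [MeasurableSpace Y] [BorelSpace Y]
    (μx : Measure X) (μy : Measure Y) [SigmaFinite μx] [SigmaFinite μy]
    (f : X → Y → ℝ)
    (hf_meas : Measurable (Function.uncurry f))
    (hf_nonneg : ∀ x y, 0 ≤ f x y)
    (hf_prob : ∫ q, f q.1 q.2 ∂(μx.prod μy) = 1)
    (fX : X → ℝ) (hfX : ∀ x, fX x = ∫ y, f x y ∂μy)
    (fY : Y → ℝ) (hfY : ∀ y, fY y = ∫ x, f x y ∂μx)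
    (hfX_pos : ∀ x, 0 < fX x) (hfY_pos : ∀ y, 0 < fY y)
    (fXY : X → Y → ℝ) (hfXY : ∀ x y, fXY x y = f x y / fY y)
    (fYX : Y → X → ℝ) (hfYX : ∀ y x, fYX y x = f x y / fX x)
    (p : X → X → ℝ) (hp : ∀ x x', p x x' = ∫ y, fXY x y * fYX y x' ∂μy)
    (R : Kernel Y Y) [IsMarkovKernel R]
    (hR_inv : ∀ A : Set Y, MeasurableSet A →
      ∫ y, ((R y) A).toReal * fY y ∂μy = ∫ y in A, fY y ∂μy)
    (pR : X → X → ℝ)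
    (hpR : ∀ x x', pR x x' = ∫ y, (∫ y', fXY x y' ∂(R y)) * fYX y x' ∂μy) :
    ∀ h : X → ℝ, Measurable h →
      Integrable (fun x => h x ^ 2 * fX x) μx →
      (∫ x, h x * fX x ∂μx) = 0 →
      ∫ x, (∫ x', h x * h x' * pR x x' * fX x' ∂μx) ∂μx
        ≤ ∫ x, (∫ x', h x * h x' * p x x' * fX x' ∂μx) ∂μx :=
  pR_dominates_da_covariance_general μx μy f hf_meas hf_nonneg hf_prob fX hfX fY hfY hfX_pos hfY_pos
    fXY hfXY fYX hfYX p hp R hR_inv pR hpR
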